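/- For every 1 ≤ i ≤ r and every integer a, the Chinta–Gunnells action satisfies σ_i(x_i^{a+1}·x_{i+1}^{a+n}) = x_i^{a+1}·x_{i+1}^{a+n}. -/

import Mathlib

open scoped BigOperators Classical
open scoped Fin.NatCast

noncomputable section

namespace MetaPaper

variable (F : Type) [Field F]

/-- The field of rational functions in `x_1, …, x_{r+1}` over `F`. -/
abbrev K (r : ℕ) : Type := FractionRing (MvPolynomial (Fin (r+1)) F)

variable (r : ℕ)

/-- The variable `x_i` as an element of `K`. -/
def XX (i : Fin (r+1)) : K F r :=
  algebraMap (MvPolynomial (Fin (r+1)) F) (K F r) (MvPolynomial.X i)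

/-- A constant from `F` as an element of `K`. -/
def CC (c : F) : K F r :=
  algebraMap (MvPolynomial (Fin (r+1)) F) (K F r) (MvPolynomial.C c)

/-- The monomial `x^λ = x_1^{λ_1} ⋯ x_{r+1}^{λ_{r+1}}`. -/
def mon (lam : Fin (r+1) → ℤ) : K F r := ∏ i, XX F r i ^ lam i

/-- The simple reflection `σ_{i+1}` (0-indexed: swapping coordinates `i` and `i+1`). -/
def sref (i : ℕ) : Equiv.Perm (Fin (r+1)) :=
  Equiv.swap ((i : Fin (r+1))) (((i+1 : ℕ) : Fin (r+1)))

/-- The product of the simple reflections indexed by a word. -/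
def wordProd (l : List ℕ) : Equiv.Perm (Fin (r+1)) := (l.map (sref r)).prod

/-- The (Coxeter) length of a permutation: the least length of a word in the
simple reflections representing it. -/
def plen (u : Equiv.Perm (Fin (r+1))) : ℕ :=
  sInf {m | ∃ l : List ℕ, (∀ i ∈ l, i < r) ∧ l.length = m ∧ wordProd r l = u}

/-- The strong Bruhat order: `u ≤ w` iff `u` is the product of a subword of a
reduced word for `w`. -/
def BruhatLE (u w : Equiv.Perm (Fin (r+1))) : Prop :=
  ∃ l : List ℕ, (∀ i ∈ l, i < r) ∧ wordProd r l = w ∧ l.length = plen r w ∧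
    ∃ l' : List ℕ, l'.Sublist l ∧ wordProd r l' = u

/-- The favourite reduced word `σ_1, σ_2 σ_1, σ_3 σ_2 σ_1, …` (0-indexed) for the
longest element of `S_{m+1}`. -/
def favWord (m : ℕ) : List ℕ := (List.range m).flatMap (fun b => (List.range (b+1)).reverse)

/-- `x^{α_i} = x_i / x_{i+1}` (0-indexed `i`). -/
def xalpha (i : ℕ) : K F r := XX F r (i : Fin (r+1)) / XX F r ((i+1 : ℕ) : Fin (r+1))

/-- The sublattice `Λ₀` of exponent vectors whose coordinates are all congruent mod `n`. -/
def Lam0 (n : ℕ) : Set (Fin (r+1) → ℤ) := {lam | ∀ i j, (n : ℤ) ∣ lam i - lam j}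

/-- The subfield `K₀` of `K` generated by the monomials `x^λ` with `λ ∈ Λ₀`. -/
def K0 (n : ℕ) : Subfield (K F r) :=
  Subfield.closure {x | ∃ lam ∈ Lam0 r n, x = mon F r lam}

variable (n : ℕ) (v : F) (g : ℤ → F)

/-- Data of the metaplectic (Chinta–Gunnells) action of `W = S_{r+1}` on `K`,
together with the ordinary permutation action, and their defining properties. -/
structure Setup : Type where
  /-- the Chinta–Gunnells action -/
  act : Equiv.Perm (Fin (r+1)) → K F r → K F r
  /-- the ordinary permutation action on `K` -/
  perm : Equiv.Perm (Fin (r+1)) → K F r ≃+* K F r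
  perm_X : ∀ w i, perm w (XX F r i) = XX F r (w i)
  perm_const : ∀ w c, perm w (CC F r c) = CC F r c
  perm_one : ∀ f, perm 1 f = f
  perm_mul : ∀ u w f, perm (u * w) f = perm u (perm w f)
  act_one : ∀ f, act 1 f = f
  act_mul : ∀ u w f, act (u * w) f = act u (act w f)
  act_add : ∀ w f h, act w (f + h) = act w f + act w h
  act_const_mul : ∀ w c f, act w (CC F r c * f) = CC F r c * act w f
  act_simple : ∀ i : ℕ, i < r → ∀ lam : Fin (r+1) → ℤ,
    act (sref r i) (mon F r lam) =
      mon F r (fun j => lam (sref r i j)) / (1 - CC F r v * xalpha F r i ^ (n : ℕ)) *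
        (xalpha F r i ^ (-((lam (((i+1 : ℕ) : Fin (r+1))) - lam ((i : Fin (r+1)))) % (n : ℤ)))
            * (1 - CC F r v)
          - CC F r v * CC F r (g (1 + lam (((i+1 : ℕ) : Fin (r+1))) - lam ((i : Fin (r+1)))))
            * xalpha F r i ^ (1 - (n : ℤ)) * (1 - xalpha F r i ^ (n : ℕ)))
  act_K0 : ∀ i : ℕ, i < r → ∀ h f : K F r, h ∈ K0 F r n →
    act (sref r i) (h * f) = perm (sref r i) h * act (sref r i) f

variable {F r n v g}

/-- The metaplectic Demazure operator `D_i`. -/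
def Dem (S : Setup F r n v g) (i : ℕ) (f : K F r) : K F r :=
  (f - xalpha F r i ^ (n : ℕ) * S.act (sref r i) f) / (1 - xalpha F r i ^ (n : ℕ))

/-- The metaplectic Demazure–Lusztig operator `T_i`. -/
def DL (S : Setup F r n v g) (i : ℕ) (f : K F r) : K F r :=
  (1 - CC F r v * xalpha F r i ^ (n : ℕ)) * Dem S i f - f

/-- `D_{i_1} ⋯ D_{i_l}` for a word `[i_1, …, i_l]`. -/
def DWord (S : Setup F r n v g) : List ℕ → K F r → K F r
  | [] => fun f => f
  | i :: l => fun f => Dem S i (DWord S l f)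

/-- `T_{i_1} ⋯ T_{i_l}` for a word `[i_1, …, i_l]`. -/
def TWord (S : Setup F r n v g) : List ℕ → K F r → K F r
  | [] => fun f => f
  | i :: l => fun f => DL S i (TWord S l f)

/-- `D_u` for `u ∈ W`, via a chosen reduced word for `u` (by the braid relations
this does not depend on the choice). -/
def Dperm (S : Setup F r n v g) (u : Equiv.Perm (Fin (r+1))) : K F r → K F r :=
  if h : ∃ l : List ℕ, (∀ i ∈ l, i < r) ∧ l.length = plen r u ∧ wordProd r l = u
  then DWord S h.choose else id

/-- `T_u` for `u ∈ W`, via a chosen reduced word for `u`. -/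
def Tperm (S : Setup F r n v g) (u : Equiv.Perm (Fin (r+1))) : K F r → K F r :=
  if h : ∃ l : List ℕ, (∀ i ∈ l, i < r) ∧ l.length = plen r u ∧ wordProd r l = u
  then TWord S h.choose else id

variable (F r n v g)

/-- `a : ℕ → ℕ → ℤ` encodes a Gelfand–Tsetlin pattern of rank `m`
(entries `a i j`, `0 ≤ i ≤ j ≤ m`, zero outside this triangle). -/
def IsGT (m : ℕ) (a : ℕ → ℕ → ℤ) : Prop :=
  (∀ i j, (j < i ∨ m < j) → a i j = 0) ∧
  (∀ i j, i ≤ j → j ≤ m → 0 ≤ a i j) ∧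
  (∀ i j, 1 ≤ i → i ≤ j → j ≤ m → a i j ≤ a (i-1) (j-1) ∧ a (i-1) j ≤ a i j)

/-- `d_i`, the sum of the `i`-th row of a pattern. -/
def rowSum (m : ℕ) (a : ℕ → ℕ → ℤ) (i : ℕ) : ℤ := ∑ j ∈ Finset.Icc i m, a i j

/-- The `p`-th coordinate (0-indexed) of the weight `wt(T) = (d_m, d_{m-1}-d_m, …, d_0-d_1)`. -/
def wtN (m : ℕ) (a : ℕ → ℕ → ℤ) (p : ℕ) : ℤ := rowSum m a (m - p) - rowSum m a (m - p + 1)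

/-- The Γ-array of a pattern: `Γ_{i,j} = Σ_{k=j}^{m} (a_{i,k} - a_{i-1,k})`. -/
def GammaArr (m : ℕ) (a : ℕ → ℕ → ℤ) (i j : ℕ) : ℤ :=
  ∑ k ∈ Finset.Icc j m, (a i k - a (i-1) k)

/-- `h♭(a) = 1 - v` if `n ∣ a`, else `0`. -/
def hflat (a : ℤ) : F := if (n : ℤ) ∣ a then 1 - v else 0

/-- `g♭(a) = v · g_a`. -/
def gflat (a : ℤ) : F := v * g a

/-- The factor `g_{ij}(T)` of the degree-`n` Gelfand–Tsetlin coefficient. -/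
def gcoefP (m : ℕ) (a : ℕ → ℕ → ℤ) (i j : ℕ) : F :=
  if GammaArr m a i (j+1) = GammaArr m a i j ∧
      GammaArr m a i j < GammaArr m a i (j+1) + a (i-1) (j-1) - a (i-1) j then 1
  else if GammaArr m a i (j+1) < GammaArr m a i j ∧
      GammaArr m a i j < GammaArr m a i (j+1) + a (i-1) (j-1) - a (i-1) j then
    hflat F n v (GammaArr m a i j)
  else if GammaArr m a i (j+1) < GammaArr m a i j ∧
      GammaArr m a i j = GammaArr m a i (j+1) + a (i-1) (j-1) - a (i-1) j then
    gflat F v g (GammaArr m a i j)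
  else 0

/-- The degree-`n` Gelfand–Tsetlin coefficient `G^{(n)}(T)`. -/
def Gcoef (m : ℕ) (a : ℕ → ℕ → ℤ) : F :=
  ∏ i ∈ Finset.Icc 1 m, ∏ j ∈ Finset.Icc i m, gcoefP F n v g m a i j

/-- `Γ = (Γ_1, …, Γ_m)` (1-indexed, zero outside) is `ν`-admissible. -/
def IsAdm (m : ℕ) (ν Γ : ℕ → ℤ) : Prop :=
  (∀ j, j = 0 ∨ m < j → Γ j = 0) ∧
  ∀ j, 1 ≤ j → j ≤ m → Γ (j+1) ≤ Γ j ∧ Γ j ≤ Γ (j+1) + ν j - ν (j+1) + 1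

/-- `Γ` is `(ν,k)`-admissible. -/
def IsAdmK (m k : ℕ) (ν Γ : ℕ → ℤ) : Prop := IsAdm m ν Γ ∧ ∀ j, k + 1 < j → Γ j = 0

/-- The `p`-th coordinate (0-indexed) of
`wt^{(ν)}(Γ) = (ν_{m+1}+Γ_m, ν_m+Γ_{m-1}-Γ_m, …, ν_1-Γ_1)`. -/
def wtGam (m : ℕ) (ν Γ : ℕ → ℤ) (p : ℕ) : ℤ := ν (m+1-p) + Γ (m-p) - Γ (m-p+1)

/-- The factor `c_j` of `G_1^{(ν)}(Γ)`. -/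
def gamCoef (ν Γ : ℕ → ℤ) (j : ℕ) : F :=
  if Γ (j+1) = Γ j ∧ Γ j < Γ (j+1) + ν j - ν (j+1) + 1 then 1
  else if Γ (j+1) < Γ j ∧ Γ j < Γ (j+1) + ν j - ν (j+1) + 1 then hflat F n v (Γ j)
  else if Γ (j+1) < Γ j ∧ Γ j = Γ (j+1) + ν j - ν (j+1) + 1 then gflat F v g (Γ j)
  else 0

/-- `G_1^{(ν)}(Γ)`. -/
def G1 (m : ℕ) (ν Γ : ℕ → ℤ) : F := ∏ j ∈ Finset.Icc 1 m, gamCoef F n v g ν Γ j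

/-- The top row `λ + ρ` of a pattern, as a function `ℕ → ℤ` (0-indexed columns). -/
def topRowOf (lam : Fin (r+1) → ℤ) : ℕ → ℤ :=
  fun j => if h : j ≤ r then lam ⟨j, by omega⟩ + ((r : ℤ) - (j : ℤ)) else 0

/-- The weight `λ` reread as a 1-indexed function `ℕ → ℤ` (`ν_j = λ_j`). -/
def nuOf (lam : Fin (r+1) → ℤ) : ℕ → ℤ :=
  fun j => if h : 1 ≤ j ∧ j ≤ r + 1 then lam ⟨j - 1, by omega⟩ else 0

/-- Dominance: `λ_1 ≥ λ_2 ≥ … `. -/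
def Dominant (m : ℕ) (lam : Fin m → ℤ) : Prop := ∀ i j : Fin m, i ≤ j → lam j ≤ lam i

/-- Position of `Γ_{i,j}` in the reading `b_1, b_2, …` of the Γ-array
(rows bottom to top, each row left to right). -/
def bpos (m i j : ℕ) : ℕ := (m - i) * (m - i + 1) / 2 + (j - i + 1)


/-- `δ(A,B) = h♭(A)` if `A < B`, `h♭(A) - 1` if `A = B`, `0` if `A > B`. -/
def deltaHG (A B : ℤ) : F :=
  if A < B then hflat F n v A else if A = B then hflat F n v A - 1 else 0

/-!
Write `y = x^{α_i}` and `d = λ_{i+1} - λ_i`. When `d ≡ -1 (mod n)` the remainder `r_n(d)` is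
`n - 1` and `g_{1+d} = g_0 = -1`, so the bracket in the Chinta–Gunnells formula collapses to
`y^{1-n} (1 - v y^n)`, which cancels the denominator: `σ_i(x^λ) = (σ_i.x^λ) y^{1-n}`.
For `λ = (a+1, a+n)` in positions `i, i+1` the factor `y^{1-n} = y^{λ_i - λ_{i+1}}` exactly undoes
the swap of the two exponents.
-/

variable {F : Type} [Field F] {r : ℕ}

lemma XX_ne_zero (k : Fin (r+1)) : XX F r k ≠ 0 :=
  (map_ne_zero_iff _ (IsFractionRing.injective _ _)).mpr (MvPolynomial.X_ne_zero k)

lemma natCast_ne_natCast_succ {i : ℕ} (hi : i < r) :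
    (i : Fin (r+1)) ≠ ((i+1 : ℕ) : Fin (r+1)) := by
  intro h
  have := congrArg Fin.val h
  rw [Fin.val_cast_of_lt (by omega), Fin.val_cast_of_lt (by omega)] at this
  omega

lemma mon_add (lam mu : Fin (r+1) → ℤ) : mon F r (lam + mu) = mon F r lam * mon F r mu := by
  rw [mon, mon, mon, ← Finset.prod_mul_distrib]
  exact Finset.prod_congr rfl fun k _ => zpow_add₀ (XX_ne_zero k) _ _

lemma mon_single (p : Fin (r+1)) (d : ℤ) : mon F r (Pi.single p d) = XX F r p ^ d := by
  rw [mon, Finset.prod_eq_single p (fun k _ hk => by rw [Pi.single_eq_of_ne hk, zpow_zero])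
    (fun h => absurd (Finset.mem_univ p) h), Pi.single_eq_same]

lemma comp_swap_add_single_add_single {p q : Fin (r+1)} (hpq : p ≠ q) (lam : Fin (r+1) → ℤ) :
    lam ∘ Equiv.swap p q + Pi.single p (lam p - lam q) + Pi.single q (lam q - lam p) = lam := by
  funext k
  by_cases hkp : k = p
  · subst hkp; simp [Pi.single_eq_of_ne hpq]
  by_cases hkq : k = q
  · subst hkq; simp [Pi.single_eq_of_ne hkp]
  · simp [Pi.single_eq_of_ne hkp, Pi.single_eq_of_ne hkq, Equiv.swap_apply_of_ne_of_ne hkp hkq]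

lemma mon_comp_sref_mul_xalpha_zpow {i : ℕ} (hi : i < r) (lam : Fin (r+1) → ℤ) :
    mon F r (fun j => lam (sref r i j)) *
        xalpha F r i ^ (lam (i : Fin (r+1)) - lam ((i+1 : ℕ) : Fin (r+1))) = mon F r lam := by
  have hxalpha : ∀ d : ℤ, xalpha F r i ^ d =
      mon F r (Pi.single (i : Fin (r+1)) d) * mon F r (Pi.single ((i+1 : ℕ) : Fin (r+1)) (-d)) := by
    intro d
    rw [mon_single, mon_single, xalpha, div_zpow, zpow_neg, div_eq_mul_inv]
  conv_rhs => rw [← comp_swap_add_single_add_single (natCast_ne_natCast_succ hi) lam]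
  rw [hxalpha, mon_add, mon_add, neg_sub, mul_assoc]
  rfl

lemma X_pow_ne_C_mul_X_pow {σ : Type*} [DecidableEq σ] {p q : σ} (hpq : p ≠ q) {n : ℕ}
    (hn : n ≠ 0) (c : F) :
    (MvPolynomial.X q : MvPolynomial σ F) ^ n ≠ MvPolynomial.C c * MvPolynomial.X p ^ n := by
  intro h
  have := congrArg (MvPolynomial.eval (Pi.single q 1)) h
  simp [Pi.single_eq_of_ne hpq, zero_pow hn] at this

lemma one_sub_CC_mul_xalpha_pow_ne_zero {i : ℕ} (hi : i < r) {n : ℕ} (hn : n ≠ 0) (c : F) :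
    1 - CC F r c * xalpha F r i ^ n ≠ 0 := by
  rw [sub_ne_zero, xalpha, div_pow, ← mul_div_assoc, ne_eq,
    eq_div_iff (pow_ne_zero _ (XX_ne_zero _)), one_mul, XX, XX, CC, ← map_pow, ← map_pow,
    ← map_mul, (IsFractionRing.injective _ _).eq_iff]
  exact X_pow_ne_C_mul_X_pow (natCast_ne_natCast_succ hi) hn c

lemma act_sref_mon_of_dvd {n : ℕ} (hn : 1 ≤ n) {v : F} {g : ℤ → F}
    (hgper : ∀ i j : ℤ, i % (n : ℤ) = j % (n : ℤ) → g i = g j) (hg0 : g 0 = -1)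
    (S : Setup F r n v g) {i : ℕ} (hi : i < r) (lam : Fin (r+1) → ℤ)
    (hlam : (n : ℤ) ∣ 1 + lam ((i+1 : ℕ) : Fin (r+1)) - lam (i : Fin (r+1))) :
    S.act (sref r i) (mon F r lam) =
      mon F r (fun j => lam (sref r i j)) * xalpha F r i ^ (1 - (n : ℤ)) := by
  set p : Fin (r+1) := (i : Fin (r+1))
  set q : Fin (r+1) := ((i+1 : ℕ) : Fin (r+1))
  have hrem : (lam q - lam p) % n = n - 1 := by
    have hmod : lam q - lam p ≡ n - 1 [ZMOD n] := Int.modEq_iff_dvd.mpr <| by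
      rw [show (n : ℤ) - 1 - (lam q - lam p) = n - (1 + lam q - lam p) by ring]
      exact dvd_sub dvd_rfl hlam
    exact hmod.eq.trans (Int.emod_eq_of_lt (by omega) (by omega))
  have hg : g (1 + lam q - lam p) = -1 := by
    rw [hgper _ 0 (by rw [Int.emod_eq_zero_of_dvd hlam, Int.zero_emod]), hg0]
  have hD := one_sub_CC_mul_xalpha_pow_ne_zero hi (n := n) (by omega) v
  set y := xalpha F r i
  have hbracket : y ^ (-(n - 1 : ℤ)) * (1 - CC F r v)
        - CC F r v * CC F r (-1) * y ^ (1 - (n : ℤ)) * (1 - y ^ n) =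
      y ^ (1 - (n : ℤ)) * (1 - CC F r v * y ^ n) := by
    rw [neg_sub]
    simp only [CC, map_neg, map_one]
    ring
  rw [S.act_simple i hi, hrem, hg, hbracket, div_mul_eq_mul_div, mul_div_assoc,
    mul_div_cancel_right₀ _ hD]

theorem statement5_general (r n : ℕ) (hn : 1 ≤ n) (v : ℂ) (g : ℤ → ℂ)
    (hgper : ∀ i j : ℤ, i % (n : ℤ) = j % (n : ℤ) → g i = g j)
    (hg0 : g 0 = -1)
    (S : Setup ℂ r n v g) :
    ∀ i : ℕ, i < r → ∀ a : ℤ,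
      S.act (sref r i) (mon ℂ r (fun j =>
          if j = (i : Fin (r+1)) then a + 1
          else if j = ((i+1 : ℕ) : Fin (r+1)) then a + (n : ℤ) else 0))
        = mon ℂ r (fun j =>
          if j = (i : Fin (r+1)) then a + 1
          else if j = ((i+1 : ℕ) : Fin (r+1)) then a + (n : ℤ) else 0) := by
  intro i hi a
  set lam : Fin (r+1) → ℤ := fun j =>
    if j = (i : Fin (r+1)) then a + 1
    else if j = ((i+1 : ℕ) : Fin (r+1)) then a + (n : ℤ) else 0
  have hlam_i : lam (i : Fin (r+1)) = a + 1 := if_pos rfl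
  have hlam_succ : lam ((i+1 : ℕ) : Fin (r+1)) = a + n :=
    (if_neg (natCast_ne_natCast_succ hi).symm).trans (if_pos rfl)
  have hdvd : (n : ℤ) ∣ 1 + lam ((i+1 : ℕ) : Fin (r+1)) - lam (i : Fin (r+1)) :=
    ⟨1, by rw [hlam_i, hlam_succ]; ring⟩
  calc S.act (sref r i) (mon ℂ r lam)
      = mon ℂ r (fun j => lam (sref r i j)) * xalpha ℂ r i ^ (1 - (n : ℤ)) :=
        act_sref_mon_of_dvd hn hgper hg0 S hi lam hdvd
    _ = mon ℂ r (fun j => lam (sref r i j)) *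
          xalpha ℂ r i ^ (lam (i : Fin (r+1)) - lam ((i+1 : ℕ) : Fin (r+1))) := by
        rw [hlam_i, hlam_succ, add_sub_add_left_eq_sub]
    _ = mon ℂ r lam := mon_comp_sref_mul_xalpha_zpow hi lam

/-- the Chinta–Gunnells action satisfies
`σ_i(x_i^{a+1} x_{i+1}^{a+n}) = x_i^{a+1} x_{i+1}^{a+n}`. -/
theorem statement5 (r n : ℕ) (hr : 1 ≤ r) (hn : 1 ≤ n) (v : ℂ) (g : ℤ → ℂ)
    (hv : v ≠ 0)
    (hgper : ∀ i j : ℤ, i % (n : ℤ) = j % (n : ℤ) → g i = g j)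
    (hg0 : g 0 = -1)
    (hginv : ∀ i : ℤ, 1 ≤ i → i ≤ (n : ℤ) - 1 → g i * g ((n : ℤ) - i) = v⁻¹)
    (S : Setup ℂ r n v g) :
    ∀ i : ℕ, i < r → ∀ a : ℤ,
      S.act (sref r i) (mon ℂ r (fun j =>
          if j = (i : Fin (r+1)) then a + 1
          else if j = ((i+1 : ℕ) : Fin (r+1)) then a + (n : ℤ) else 0))
        = mon ℂ r (fun j =>
          if j = (i : Fin (r+1)) then a + 1
          else if j = ((i+1 : ℕ) : Fin (r+1)) then a + (n : ℤ) else 0) :=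
  statement5_general r n hn v g hgper hg0 S

end MetaPaper
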